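/- Let (V,μ) be a simple, strongly connected, finite weighted directed graph with Perron measure 𝔪. Assume the Ricci curvature satisfies κ(x,y) ≥ K > 0 for all x ≠ y and sup_x 𝒟_x ≤ Λ for some Λ ≥ 1. Then for every 1-Lipschitz function f : V → ℝ and every r > 0, 𝔪({f ≥ 𝔪(f) + r}) ≤ e^{−Kr²/Λ²}. -/

import Mathlib

/-!
Let `P_t = e^{-tℒ}` be the heat semigroup of the Chung Laplacian; `𝒫` is reversible with respect
to `𝔪`, so `P_t` preserves `𝔪`. Positive curvature gives the gradient estimate: `P_t f` is
`e^{-Kt}`-Lipschitz when `f` is 1-Lipschitz, because at a pair maximising the difference quotient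
of `P_t f` the curvature bound makes that quotient decrease at rate `K` (Grönwall's inequality for
a maximum of finitely many functions). Hence `P_t f → 𝔪(f)`, and across every edge `P_t f` varies
by at most `e^{-Kt}Λ`. For `F(t) = 𝔪(e^{λ P_t f})`, symmetrising `-F' = 𝔪(ℒ(λ P_t f) e^{λ P_t f})`
over the edges and using `(a - b)(e^a - e^b) ≤ (a - b)²(e^a + e^b)/2` gives
`F' ≥ -(λ²Λ²/2) e^{-2Kt} F`; integrating over `[0, ∞)` yields `𝔪(e^{λf}) ≤ e^{λ𝔪(f) + λ²Λ²/(4K)}`,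
and Chernoff's bound with `λ = 2Kr/Λ²` concludes.
-/

open Finset

namespace Chung

variable {V : Type*}

/-- There is a directed path of length `n` from `x` to `y` (edges are pairs of
positive weight). -/
def PathLen (μ : V → V → ℝ) (n : ℕ) (x y : V) : Prop :=
  ∃ p : ℕ → V, p 0 = x ∧ p n = y ∧ ∀ i < n, 0 < μ (p i) (p (i + 1))

/-- The (non-symmetric) graph distance: the minimal length of a directed path. -/
noncomputable def gdist (μ : V → V → ℝ) (x y : V) : ℝ :=
  (sInf {n : ℕ | PathLen μ n x y} : ℕ)

/-- `(V,μ)` is a simple, strongly connected weighted directed graph. -/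
def IsGraph (μ : V → V → ℝ) : Prop :=
  (∀ x y, 0 ≤ μ x y) ∧ (∀ x, μ x x = 0) ∧ (∀ x y, ∃ n, PathLen μ n x y)

variable [Fintype V]

/-- The transition probability kernel `P(x,y) = μ_{xy}/μ(x)`. -/
noncomputable def ker (μ : V → V → ℝ) (x y : V) : ℝ := μ x y / ∑ z, μ x z

/-- `m` is the Perron (stationary probability) measure of the kernel `P`. -/
def IsPerron (μ : V → V → ℝ) (m : V → ℝ) : Prop :=
  (∀ x, 0 < m x) ∧ (∑ x, m x = 1) ∧ ∀ y, m y = ∑ x, m x * ker μ x y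

/-- The mean transition probability kernel `𝒫 = (P + ←P)/2`,
where `←P(x,y) = m(y)P(y,x)/m(x)`. -/
noncomputable def meanKer (μ : V → V → ℝ) (m : V → ℝ) (x y : V) : ℝ :=
  (ker μ x y + m y * ker μ y x / m x) / 2

variable [DecidableEq V]

/-- The Chung Laplacian `ℒ = I − 𝒫` as a matrix. -/
noncomputable def lapMat (μ : V → V → ℝ) (m : V → ℝ) : Matrix V V ℝ :=
  1 - Matrix.of (meanKer μ m)

/-- The Chung Laplacian applied to a function. -/
noncomputable def lap (μ : V → V → ℝ) (m : V → ℝ) (f : V → ℝ) : V → ℝ :=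
  (lapMat μ m).mulVec f

/-- The heat semigroup `P_t = e^{−tℒ}` as a matrix. -/
noncomputable def heatMat (μ : V → V → ℝ) (m : V → ℝ) (t : ℝ) : Matrix V V ℝ :=
  NormedSpace.exp ((-t) • lapMat μ m)

/-- `P_t f`. -/
noncomputable def heatSG (μ : V → V → ℝ) (m : V → ℝ) (t : ℝ) (f : V → ℝ) : V → ℝ :=
  (heatMat μ m t).mulVec f

/-- The heat kernel measure `p_x^t(y) = m(y)·(P_t δ_x)(y)/m(x)`. -/
noncomputable def heatKer (μ : V → V → ℝ) (m : V → ℝ) (t : ℝ) (x y : V) : ℝ :=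
  m y * heatSG μ m t (fun z => if z = x then 1 else 0) y / m x

/-- `π` is a coupling of the probability measures `ν₀` and `ν₁`. -/
def IsCoupling (π : V → V → ℝ) (ν₀ ν₁ : V → ℝ) : Prop :=
  (∀ x y, 0 ≤ π x y) ∧ (∀ x, ∑ y, π x y = ν₀ x) ∧ (∀ y, ∑ x, π x y = ν₁ y)

/-- Wasserstein distance for the (possibly non-symmetric) cost `d`. -/
noncomputable def wass (d : V → V → ℝ) (ν₀ ν₁ : V → ℝ) : ℝ :=
  sInf {r : ℝ | ∃ π : V → V → ℝ, IsCoupling π ν₀ ν₁ ∧ r = ∑ x, ∑ y, d x y * π x y}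

/-- Lipschitz constant with respect to the (non-symmetric) distance `d`. -/
noncomputable def lipConst (d : V → V → ℝ) (f : V → ℝ) : ℝ :=
  sSup {r : ℝ | ∃ x y, x ≠ y ∧ r = (f y - f x) / d x y}

/-- The Lin–Lu–Yau type Ricci curvature of the directed graph, via the limit-free
formula `κ(x,y) = inf {∇_{xy} ℒf : f 1-Lipschitz, ∇_{xy} f = 1}`. -/
noncomputable def ricci (μ : V → V → ℝ) (m : V → ℝ) (x y : V) : ℝ :=
  sInf {r : ℝ | ∃ f : V → ℝ, (∀ a b, f b - f a ≤ gdist μ a b) ∧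
    (f y - f x) / gdist μ x y = 1 ∧
    r = (lap μ m f y - lap μ m f x) / gdist μ x y}

end Chung

open Filter Topology Real

lemma exp_sub_one_le_mul_exp_add_one_div_two {u : ℝ} (hu : 0 ≤ u) :
    exp u - 1 ≤ u * (exp u + 1) / 2 := by
  let ψ : ℝ → ℝ := fun v => v * (exp v + 1) / 2 - (exp v - 1)
  have hψ : ∀ v, HasDerivAt ψ ((1 - (1 - v) * exp v) / 2) v := fun v =>
    ((((hasDerivAt_id' v).mul ((hasDerivAt_exp v).add_const 1)).div_const 2).sub
      ((hasDerivAt_exp v).sub_const 1)).congr_deriv (by ring)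
  -- `(1 - v) e^v ≤ 1` is `1 - v ≤ e^{-v}`
  have hψ' : ∀ v, 0 ≤ deriv ψ v := fun v => by
    rw [(hψ v).deriv]
    have : (1 - v) * exp v ≤ exp (-v) * exp v :=
      mul_le_mul_of_nonneg_right (by linarith [add_one_le_exp (-v)]) (exp_pos v).le
    rw [← exp_add, neg_add_cancel, exp_zero] at this
    linarith
  have := monotone_of_deriv_nonneg (fun v => (hψ v).differentiableAt) hψ' hu
  simp only [ψ, zero_mul, zero_div, exp_zero, sub_self] at this
  linarith

lemma sub_mul_exp_sub_exp_le {a b c : ℝ} (h : |a - b| ≤ c) :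
    (a - b) * (exp a - exp b) ≤ c ^ 2 * (exp a + exp b) / 2 := by
  wlog hba : b ≤ a generalizing a b
  · have := this (by rwa [abs_sub_comm]) (le_of_not_ge hba)
    linarith
  have hu : 0 ≤ a - b := sub_nonneg.2 hba
  have hexp : exp a - exp b ≤ (a - b) * (exp a + exp b) / 2 := by
    have := mul_le_mul_of_nonneg_left (exp_sub_one_le_mul_exp_add_one_div_two hu)
      (exp_pos b).le
    rw [exp_sub, div_add_one (exp_pos b).ne', div_sub_one (exp_pos b).ne'] at this
    field_simp at this ⊢
    linarith
  have hsq : (a - b) ^ 2 ≤ c ^ 2 :=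
    sq_le_sq' (by linarith [neg_abs_le (a - b)]) (by linarith [le_abs_self (a - b)])
  calc (a - b) * (exp a - exp b) ≤ (a - b) * ((a - b) * (exp a + exp b) / 2) :=
        mul_le_mul_of_nonneg_left hexp hu
    _ = (a - b) ^ 2 * (exp a + exp b) / 2 := by ring
    _ ≤ c ^ 2 * (exp a + exp b) / 2 := by gcongr

lemma sum_sum_mul_sub_mul_exp_le {ι : Type*} [Fintype ι] {w : ι → ι → ℝ}
    (hw₀ : ∀ x z, 0 ≤ w x z) (hw : ∀ x z, w x z = w z x) {h : ι → ℝ} {c : ℝ}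
    (hc : ∀ x z, 0 < w x z → |h x - h z| ≤ c) :
    ∑ x, ∑ z, w x z * (h x - h z) * exp (h x) ≤ c ^ 2 / 2 * ∑ x, (∑ z, w x z) * exp (h x) := by
  have hterm : ∀ x z, w x z * ((h x - h z) * (exp (h x) - exp (h z))) ≤
      w x z * (c ^ 2 * (exp (h x) + exp (h z)) / 2) := fun x z => by
    rcases (hw₀ x z).eq_or_lt with h0 | hpos
    · simp [← h0]
    · exact mul_le_mul_of_nonneg_left (sub_mul_exp_sub_exp_le (hc x z hpos)) (hw₀ x z)
  have swap : ∀ F : ι → ι → ℝ, ∑ x, ∑ z, w x z * F x z = ∑ x, ∑ z, w x z * F z x := fun F => by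
    rw [sum_comm]; simp_rw [hw]
  calc ∑ x, ∑ z, w x z * (h x - h z) * exp (h x)
      = (∑ x, ∑ z, w x z * ((h x - h z) * exp (h x)) +
          ∑ x, ∑ z, w x z * ((h z - h x) * exp (h z))) / 2 := by
        rw [← swap fun x z => (h x - h z) * exp (h x)]
        simp only [mul_assoc]
        ring
    _ = (∑ x, ∑ z, w x z * ((h x - h z) * (exp (h x) - exp (h z)))) / 2 := by
        simp only [← sum_add_distrib]
        congr 1
        exact sum_congr rfl fun x _ => sum_congr rfl fun z _ => by ring
    _ ≤ (∑ x, ∑ z, w x z * (c ^ 2 * (exp (h x) + exp (h z)) / 2)) / 2 :=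
        div_le_div_of_nonneg_right (sum_le_sum fun x _ => sum_le_sum fun z _ => hterm x z)
          zero_le_two
    _ = c ^ 2 / 4 * (∑ x, ∑ z, w x z * exp (h x) + ∑ x, ∑ z, w x z * exp (h z)) := by
        simp only [← sum_add_distrib, mul_sum, sum_div]
        exact sum_congr rfl fun x _ => sum_congr rfl fun z _ => by ring
    _ = c ^ 2 / 2 * ∑ x, (∑ z, w x z) * exp (h x) := by
        rw [← swap fun x z => exp (h x)]
        simp only [sum_mul]
        ring

lemma tendsto_exp_neg_mul_atTop {b : ℝ} (hb : 0 < b) :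
    Tendsto (fun t => exp (-b * t)) atTop (𝓝 0) :=
  tendsto_exp_atBot.comp (tendsto_id.const_mul_atTop_of_neg (neg_lt_zero.2 hb))

lemma eventually_slope_sup'_lt {ι : Type*} {s : Finset ι} (hs : s.Nonempty) {φ : ι → ℝ → ℝ}
    {φ' : ι → ℝ} {t r : ℝ} (hφ : ∀ i ∈ s, HasDerivAt (φ i) (φ' i) t)
    (hr : ∀ i ∈ s, φ i t = s.sup' hs (φ · t) → φ' i < r) :
    ∀ᶠ z in 𝓝[>] t, slope (fun u => s.sup' hs (φ · u)) t z < r := by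
  have key : ∀ i ∈ s, ∀ᶠ z in 𝓝[>] t, φ i z < s.sup' hs (φ · t) + r * (z - t) := by
    intro i hi
    rcases (le_sup' (φ · t) hi).eq_or_lt with hact | hlt
    · filter_upwards [(hφ i hi).hasDerivWithinAt.limsup_slope_le' (lt_irrefl t) (hr i hi hact),
        self_mem_nhdsWithin] with z hz (hzt : t < z)
      rw [slope_def_field, div_lt_iff₀ (sub_pos.2 hzt)] at hz
      linarith
    · have hcont : ContinuousAt (fun z => φ i z - r * (z - t)) t :=
        (hφ i hi).continuousAt.sub (by fun_prop)
      filter_upwards [nhdsWithin_le_nhds (hcont.eventually (gt_mem_nhds (by simpa using hlt)))]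
        with z hz
      linarith
  filter_upwards [(eventually_all_finset s).2 key, self_mem_nhdsWithin] with z hz (hzt : t < z)
  rw [slope_def_field, div_lt_iff₀ (sub_pos.2 hzt)]
  linarith [(sup'_lt_iff hs).2 hz]

lemma sup'_le_mul_exp_of_hasDerivAt {ι : Type*} {s : Finset ι} (hs : s.Nonempty)
    {φ φ' : ι → ℝ → ℝ} {K : ℝ} (hφ : ∀ i ∈ s, ∀ t, HasDerivAt (φ i) (φ' i t) t)
    (hact : ∀ t, 0 ≤ t → ∀ i ∈ s, φ i t = s.sup' hs (φ · t) →
      φ' i t ≤ -K * s.sup' hs (φ · t))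
    {t : ℝ} (ht : 0 ≤ t) : s.sup' hs (φ · t) ≤ s.sup' hs (φ · 0) * exp (-K * t) := by
  have hcont : Continuous fun u => s.sup' hs (φ · u) := Continuous.finset_sup'_apply hs
    fun i hi => continuous_iff_continuousAt.2 fun u => (hφ i hi u).continuousAt
  have := le_gronwallBound_of_liminf_deriv_right_le (ε := 0) (a := 0) (b := t)
    (f' := fun u => -K * s.sup' hs (φ · u)) hcont.continuousOn
    (fun u hu r hr => (eventually_slope_sup'_lt hs (fun i hi => hφ i hi u)
      fun i hi hi' => (hact u hu.1 i hi hi').trans_lt hr).frequently) le_rfl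
    (fun u _ => (add_zero _).ge) t ⟨ht, le_rfl⟩
  rwa [gronwallBound_ε0, sub_zero] at this

lemma le_mul_exp_of_hasDerivAt_ge_of_tendsto {F F' : ℝ → ℝ} {a b L : ℝ} (hb : 0 < b)
    (hF : ∀ t, HasDerivAt F (F' t) t) (hF' : ∀ t, 0 ≤ t → -(a * exp (-b * t)) * F t ≤ F' t)
    (hlim : Tendsto F atTop (𝓝 L)) : F 0 ≤ L * exp (a / b) := by
  -- `F t · exp(-(a/b) e^{-bt})` is nondecreasing on `[0, ∞)`
  let E : ℝ → ℝ := fun t => exp (-(a / b) * exp (-b * t))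
  have hE : ∀ t, HasDerivAt E (E t * (a * exp (-b * t))) t := fun t => by
    have := (((hasDerivAt_id' t).const_mul (-b)).exp.const_mul (-(a / b))).exp
    exact this.congr_deriv (by simp only [E]; field_simp)
  have hmono : MonotoneOn (fun t => F t * E t) (Set.Ici 0) := by
    have hd : ∀ t, HasDerivAt (fun t => F t * E t) (E t * (F' t + a * exp (-b * t) * F t)) t :=
      fun t => ((hF t).mul (hE t)).congr_deriv (by ring)
    refine monotoneOn_of_deriv_nonneg (convex_Ici 0)
      (fun t _ => (hd t).continuousAt.continuousWithinAt)
      (fun t _ => (hd t).differentiableAt.differentiableWithinAt) fun t ht => ?_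
    rw [interior_Ici, Set.mem_Ioi] at ht
    rw [(hd t).deriv]
    exact mul_nonneg (exp_pos _).le (by linarith [hF' t ht.le])
  have hexp := tendsto_exp_neg_mul_atTop hb
  have hlimE : Tendsto (fun t => F t * E t) atTop (𝓝 L) := by
    have := hlim.mul ((continuous_exp.tendsto _).comp (hexp.const_mul (-(a / b))))
    rwa [mul_zero, exp_zero, mul_one] at this
  have h0 : F 0 * E 0 ≤ L := ge_of_tendsto hlimE (eventually_ge_atTop 0 |>.mono
    fun t ht => hmono Set.self_mem_Ici ht ht)
  simp only [E, mul_zero, exp_zero, mul_one] at h0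
  rwa [exp_neg, ← div_eq_mul_inv, div_le_iff₀ (exp_pos _)] at h0

lemma sum_filter_le_exp_mul_sum_exp {ι : Type*} [Fintype ι] {m f : ι → ℝ} (hm : ∀ x, 0 ≤ m x)
    {lam : ℝ} (hlam : 0 ≤ lam) (a : ℝ) :
    ∑ x ∈ univ.filter (fun x => a ≤ f x), m x ≤ exp (-(lam * a)) * ∑ x, exp (lam * f x) * m x := by
  rw [mul_sum]
  calc ∑ x ∈ univ.filter (fun x => a ≤ f x), m x
      ≤ ∑ x ∈ univ.filter (fun x => a ≤ f x), exp (-(lam * a)) * (exp (lam * f x) * m x) := by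
        refine sum_le_sum fun x hx => ?_
        rw [← mul_assoc, ← exp_add]
        refine le_mul_of_one_le_left (hm x) (one_le_exp ?_)
        nlinarith [(mem_filter.1 hx).2]
    _ ≤ _ := sum_le_sum_of_subset_of_nonneg (filter_subset _ _) fun x _ _ =>
        mul_nonneg (exp_pos _).le (mul_nonneg (exp_pos _).le (hm x))

namespace Chung

variable {V : Type*} {μ : V → V → ℝ} {m : V → ℝ}

lemma gdist_self (μ : V → V → ℝ) (x : V) : gdist μ x x = 0 := by
  have h0 : PathLen μ 0 x x := ⟨fun _ => x, rfl, rfl, by omega⟩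
  simp [gdist, h0]

lemma gdist_nonneg (μ : V → V → ℝ) (x y : V) : 0 ≤ gdist μ x y := Nat.cast_nonneg _

lemma eq_of_pathLen_zero {x y : V} (h : PathLen μ 0 x y) : x = y := by
  obtain ⟨p, rfl, rfl, -⟩ := h
  rfl

lemma one_le_gdist (hG : IsGraph μ) {x y : V} (hxy : x ≠ y) : 1 ≤ gdist μ x y := by
  have hmem := Nat.sInf_mem (hG.2.2 x y)
  have hne : sInf {n : ℕ | PathLen μ n x y} ≠ 0 := fun h0 =>
    hxy (eq_of_pathLen_zero (h0 ▸ hmem))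
  exact Nat.one_le_cast.2 (Nat.one_le_iff_ne_zero.2 hne)

section Fintype

variable [Fintype V]

lemma sub_le_mul_gdist_of_forall_offDiag (hG : IsGraph μ) {h : V → ℝ} {L : ℝ}
    (hL : ∀ p ∈ (univ : Finset V).offDiag, (h p.2 - h p.1) / gdist μ p.1 p.2 ≤ L) (a b : V) :
    h b - h a ≤ L * gdist μ a b := by
  rcases eq_or_ne a b with rfl | hab
  · simp [gdist_self]
  · have := hL (a, b) (by simp [hab])
    rwa [div_le_iff₀ (one_pos.trans_le (one_le_gdist hG hab))] at this

lemma ker_nonneg (hG : IsGraph μ) (x y : V) : 0 ≤ ker μ x y :=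
  div_nonneg (hG.1 x y) (sum_nonneg fun z _ => hG.1 x z)

lemma sum_ker [Nontrivial V] (hG : IsGraph μ) (x : V) : ∑ z, ker μ x z = 1 := by
  obtain ⟨y, hy⟩ := exists_ne x
  obtain ⟨n, p, rfl, hpn, hp⟩ := hG.2.2 x y
  have hn : 0 < n := Nat.pos_of_ne_zero fun h0 => hy (by subst h0; exact hpn.symm)
  have hpos : 0 < ∑ z, μ (p 0) z :=
    sum_pos' (fun z _ => hG.1 _ z) ⟨p 1, mem_univ _, hp 0 hn⟩
  simp only [ker]
  rw [← sum_div, div_self hpos.ne']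

lemma meanKer_nonneg (hG : IsGraph μ) (hP : IsPerron μ m) (x y : V) : 0 ≤ meanKer μ m x y := by
  have := ker_nonneg hG x y
  have := ker_nonneg hG y x
  have := hP.1 x
  have := hP.1 y
  unfold meanKer
  positivity

lemma mul_meanKer_comm (hP : IsPerron μ m) (x z : V) :
    m x * meanKer μ m x z = m z * meanKer μ m z x := by
  have := (hP.1 x).ne'
  have := (hP.1 z).ne'
  unfold meanKer
  field_simp
  ring

lemma sum_meanKer [Nontrivial V] (hG : IsGraph μ) (hP : IsPerron μ m) (x : V) :
    ∑ z, meanKer μ m x z = 1 := by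
  have hx := (hP.1 x).ne'
  simp only [meanKer, ← sum_div, sum_add_distrib, sum_ker hG, ← sum_div, ← hP.2.2 x,
    div_self hx]
  norm_num

lemma adj_of_meanKer_pos (hG : IsGraph μ) {x z : V} (h : 0 < meanKer μ m x z) :
    0 < μ x z ∨ 0 < μ z x := by
  by_contra! hxz
  rw [meanKer, ker, ker, le_antisymm hxz.1 (hG.1 x z), le_antisymm hxz.2 (hG.1 z x)] at h
  simp at h

end Fintype

section Laplacian

variable [Fintype V] [DecidableEq V]

lemma lap_eq_sum [Nontrivial V] (hG : IsGraph μ) (hP : IsPerron μ m) (h : V → ℝ) (x : V) :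
    lap μ m h x = ∑ z, meanKer μ m x z * (h x - h z) := by
  simp only [mul_sub, sum_sub_distrib, ← sum_mul, sum_meanKer hG hP, one_mul, lap, lapMat,
    Matrix.sub_mulVec, Matrix.one_mulVec, Pi.sub_apply]
  rfl

lemma sum_lap_mul [Nontrivial V] (hG : IsGraph μ) (hP : IsPerron μ m) (h : V → ℝ) :
    ∑ x, lap μ m h x * m x = 0 := by
  -- the summand `m x 𝒫(x,z) (h x - h z)` is antisymmetric in `(x, z)`
  have hswap : ∑ x, ∑ z, m x * meanKer μ m x z * (h x - h z) =
      ∑ x, ∑ z, m x * meanKer μ m x z * (h z - h x) := by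
    rw [sum_comm]
    exact sum_congr rfl fun z _ => sum_congr rfl fun x _ => by rw [mul_meanKer_comm hP]
  have hneg : ∑ x, ∑ z, m x * meanKer μ m x z * (h z - h x) =
      -∑ x, ∑ z, m x * meanKer μ m x z * (h x - h z) := by
    simp only [← sum_neg_distrib]
    exact sum_congr rfl fun x _ => sum_congr rfl fun z _ => by ring
  have hlap : ∑ x, lap μ m h x * m x = ∑ x, ∑ z, m x * meanKer μ m x z * (h x - h z) := by
    simp only [lap_eq_sum hG hP, sum_mul]
    exact sum_congr rfl fun x _ => sum_congr rfl fun z _ => by ring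
  linarith

lemma lap_smul (c : ℝ) (h : V → ℝ) : lap μ m (c • h) = c • lap μ m h :=
  Matrix.mulVec_smul _ _ _

lemma le_lap_sub_of_le_ricci {K : ℝ} (hG : IsGraph μ) (hK : 0 < K) {x y : V} (hxy : x ≠ y)
    (hcurv : K ≤ ricci μ m x y) {f : V → ℝ} (hf : ∀ a b, f b - f a ≤ gdist μ a b)
    (hgrad : f y - f x = gdist μ x y) :
    K * gdist μ x y ≤ lap μ m f y - lap μ m f x := by
  have hd : 0 < gdist μ x y := one_pos.trans_le (one_le_gdist hG hxy)
  unfold ricci at hcurv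
  -- if it were unbounded below, the infimum would be the junk value `0`, contradicting `0 < K`
  have hbdd : BddBelow {r : ℝ | ∃ f : V → ℝ, (∀ a b, f b - f a ≤ gdist μ a b) ∧
      (f y - f x) / gdist μ x y = 1 ∧ r = (lap μ m f y - lap μ m f x) / gdist μ x y} := by
    by_contra hb
    rw [Real.sInf_of_not_bddBelow hb] at hcurv
    linarith
  have := hcurv.trans (csInf_le hbdd ⟨f, hf, by rw [hgrad, div_self hd.ne'], rfl⟩)
  rwa [le_div_iff₀ hd] at this

lemma mul_sub_le_lap_sub [Nontrivial V] {K : ℝ} (hG : IsGraph μ) (hP : IsPerron μ m) (hK : 0 < K)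
    {x y : V} (hxy : x ≠ y) (hcurv : K ≤ ricci μ m x y) {h : V → ℝ} {L : ℝ}
    (hL : ∀ a b, h b - h a ≤ L * gdist μ a b) (hattain : h y - h x = L * gdist μ x y) :
    K * (h y - h x) ≤ lap μ m h y - lap μ m h x := by
  rcases le_or_gt L 0 with hL0 | hL0
  · have hconst : ∀ a b, h a = h b := fun a b => le_antisymm
      (by linarith [hL b a, mul_nonpos_of_nonpos_of_nonneg hL0 (gdist_nonneg μ b a)])
      (by linarith [hL a b, mul_nonpos_of_nonpos_of_nonneg hL0 (gdist_nonneg μ a b)])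
    simp [lap_eq_sum hG hP, hconst _ x]
  · have := le_lap_sub_of_le_ricci hG hK hxy hcurv (f := L⁻¹ • h)
      (fun a b => by
        simp only [Pi.smul_apply, smul_eq_mul, ← mul_sub]
        rw [inv_mul_le_iff₀ hL0]
        exact hL a b)
      (by simp only [Pi.smul_apply, smul_eq_mul, ← mul_sub, hattain]; field_simp)
    simp only [lap_smul, Pi.smul_apply, smul_eq_mul, ← mul_sub, le_inv_mul_iff₀ hL0] at this
    rw [hattain]
    linarith

end Laplacian

section HeatSemigroup

variable [Fintype V] [DecidableEq V]

open Matrix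

attribute [local instance] Matrix.linftyOpNormedRing Matrix.linftyOpNormedAlgebra

lemma hasDerivAt_exp_neg_smul_mulVec (A : Matrix V V ℝ) (f : V → ℝ) (x : V) (t : ℝ) :
    HasDerivAt (fun s : ℝ => (NormedSpace.exp ((-s) • A) *ᵥ f) x)
      (-(A *ᵥ (NormedSpace.exp ((-t) • A) *ᵥ f)) x) t := by
  let ev : Matrix V V ℝ →L[ℝ] ℝ := LinearMap.toContinuousLinearMap
    { toFun := fun M => (M *ᵥ f) x
      map_add' := fun M N => by simp [add_mulVec]
      map_smul' := fun c M => by simp [smul_mulVec] }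
  have h : HasDerivAt (fun s : ℝ => ev (NormedSpace.exp (s • -A)))
      (ev (-A * NormedSpace.exp (t • -A))) t :=
    ev.hasFDerivAt.comp_hasDerivAt t (hasDerivAt_exp_smul_const' (-A) t)
  simp only [smul_neg, ← neg_smul] at h
  exact h.congr_deriv (by simp [ev, neg_mulVec, mulVec_mulVec])

lemma hasDerivAt_heatSG (μ : V → V → ℝ) (m : V → ℝ) (f : V → ℝ) (x : V) (t : ℝ) :
    HasDerivAt (fun s => heatSG μ m s f x) (-lap μ m (heatSG μ m t f) x) t :=
  hasDerivAt_exp_neg_smul_mulVec _ f x t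

lemma heatSG_zero (f : V → ℝ) : heatSG μ m 0 f = f := by
  simp [heatSG, heatMat]

lemma sum_heatSG_mul [Nontrivial V] (hG : IsGraph μ) (hP : IsPerron μ m) (f : V → ℝ) (t : ℝ) :
    ∑ x, heatSG μ m t f x * m x = ∑ x, f x * m x := by
  have hderiv : ∀ s, HasDerivAt (fun s => ∑ x, heatSG μ m s f x * m x) 0 s := fun s => by
    have := HasDerivAt.fun_sum fun x (_ : x ∈ univ) => (hasDerivAt_heatSG μ m f x s).mul_const (m x)
    simpa [neg_mul, sum_neg_distrib, sum_lap_mul hG hP] using this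
  simpa [heatSG_zero] using is_const_of_deriv_eq_zero
    (fun s => (hderiv s).differentiableAt) (fun s => (hderiv s).deriv) t 0

end HeatSemigroup

section Concentration

variable [Fintype V] [DecidableEq V] {K Λ : ℝ}

theorem heatSG_sub_le [Nontrivial V] (hG : IsGraph μ) (hP : IsPerron μ m) (hK : 0 < K)
    (hcurv : ∀ x y : V, x ≠ y → K ≤ ricci μ m x y) {f : V → ℝ}
    (hf : ∀ a b, f b - f a ≤ gdist μ a b) {t : ℝ} (ht : 0 ≤ t) (a b : V) :
    heatSG μ m t f b - heatSG μ m t f a ≤ exp (-K * t) * gdist μ a b := by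
  obtain ⟨x₀, y₀, h₀⟩ := exists_pair_ne V
  have hs : (univ : Finset V).offDiag.Nonempty := ⟨(x₀, y₀), by simp [h₀]⟩
  let φ : V × V → ℝ → ℝ := fun p s =>
    (heatSG μ m s f p.2 - heatSG μ m s f p.1) / gdist μ p.1 p.2
  have hφ : ∀ p ∈ (univ : Finset V).offDiag, ∀ s, HasDerivAt (φ p)
      ((lap μ m (heatSG μ m s f) p.1 - lap μ m (heatSG μ m s f) p.2) / gdist μ p.1 p.2) s :=
    fun p _ s => (((hasDerivAt_heatSG μ m f p.2 s).sub
      (hasDerivAt_heatSG μ m f p.1 s)).div_const _).congr_deriv (by ring)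
  have hact : ∀ s, 0 ≤ s → ∀ p ∈ (univ : Finset V).offDiag,
      φ p s = univ.offDiag.sup' hs (φ · s) →
      (lap μ m (heatSG μ m s f) p.1 - lap μ m (heatSG μ m s f) p.2) / gdist μ p.1 p.2 ≤
        -K * univ.offDiag.sup' hs (φ · s) := by
    intro s _ p hp hmax
    have hne : p.1 ≠ p.2 := (mem_offDiag.1 hp).2.2
    have hd : 0 < gdist μ p.1 p.2 := one_pos.trans_le (one_le_gdist hG hne)
    have hattain : heatSG μ m s f p.2 - heatSG μ m s f p.1 =
        univ.offDiag.sup' hs (φ · s) * gdist μ p.1 p.2 := by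
      rw [← hmax, div_mul_cancel₀ _ hd.ne']
    have := mul_sub_le_lap_sub hG hP hK hne (hcurv _ _ hne)
      (sub_le_mul_gdist_of_forall_offDiag hG fun q hq => le_sup' (φ · s) hq) hattain
    rw [hattain] at this
    rw [div_le_iff₀ hd]
    linarith
  have hM0 : univ.offDiag.sup' hs (φ · 0) ≤ 1 := sup'_le _ _ fun p hp => by
    rw [div_le_one (one_pos.trans_le (one_le_gdist hG (mem_offDiag.1 hp).2.2))]
    simpa [heatSG_zero] using hf p.1 p.2
  have hMt : univ.offDiag.sup' hs (φ · t) ≤ exp (-K * t) :=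
    (sup'_le_mul_exp_of_hasDerivAt hs hφ hact ht).trans
      (mul_le_of_le_one_left (exp_pos _).le hM0)
  exact sub_le_mul_gdist_of_forall_offDiag hG (fun p hp => (le_sup' (φ · t) hp).trans hMt) a b

theorem tendsto_heatSG [Nontrivial V] (hG : IsGraph μ) (hP : IsPerron μ m) (hK : 0 < K)
    (hcurv : ∀ x y : V, x ≠ y → K ≤ ricci μ m x y) {f : V → ℝ}
    (hf : ∀ a b, f b - f a ≤ gdist μ a b) (x : V) :
    Tendsto (fun t => heatSG μ m t f x) atTop (𝓝 (∑ z, f z * m z)) := by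
  have hdecay := tendsto_exp_neg_mul_atTop hK
  have hdiff : ∀ z, Tendsto (fun t => heatSG μ m t f x - heatSG μ m t f z) atTop (𝓝 0) := by
    intro z
    have hlo := (hdecay.mul_const (gdist μ x z)).neg
    have hhi := hdecay.mul_const (gdist μ z x)
    rw [zero_mul, neg_zero] at hlo
    rw [zero_mul] at hhi
    refine tendsto_of_tendsto_of_tendsto_of_le_of_le' hlo hhi ?_ ?_ <;>
      filter_upwards [eventually_ge_atTop 0] with t ht
    · linarith [heatSG_sub_le hG hP hK hcurv hf ht x z]
    · exact heatSG_sub_le hG hP hK hcurv hf ht z x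
  have hrepr : ∀ t, heatSG μ m t f x =
      ∑ z, f z * m z + ∑ z, (heatSG μ m t f x - heatSG μ m t f z) * m z := fun t => by
    rw [← sum_heatSG_mul hG hP f t]
    simp only [sub_mul, sum_sub_distrib, ← mul_sum, hP.2.1, mul_one]
    ring
  have := (tendsto_finsetSum univ fun z _ => (hdiff z).mul_const (m z)).const_add
    (∑ z, f z * m z)
  rw [sum_eq_zero fun z _ => zero_mul (m z), add_zero] at this
  exact this.congr fun t => (hrepr t).symm

lemma abs_heatSG_sub_le_of_meanKer_pos [Nontrivial V] (hG : IsGraph μ) (hP : IsPerron μ m)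
    (hK : 0 < K) (hcurv : ∀ x y : V, x ≠ y → K ≤ ricci μ m x y)
    (hD : ∀ x y : V, (0 < μ x y ∨ 0 < μ y x) → max (gdist μ x y) (gdist μ y x) ≤ Λ)
    {f : V → ℝ} (hf : ∀ a b, f b - f a ≤ gdist μ a b) {t : ℝ} (ht : 0 ≤ t) {x z : V}
    (hxz : 0 < meanKer μ m x z) :
    |heatSG μ m t f x - heatSG μ m t f z| ≤ exp (-K * t) * Λ := by
  obtain ⟨hxz, hzx⟩ := max_le_iff.1 (hD x z (adj_of_meanKer_pos hG hxz))
  have := heatSG_sub_le hG hP hK hcurv hf ht x z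
  have := heatSG_sub_le hG hP hK hcurv hf ht z x
  have := mul_le_mul_of_nonneg_left hxz (exp_pos (-K * t)).le
  have := mul_le_mul_of_nonneg_left hzx (exp_pos (-K * t)).le
  exact abs_le.2 ⟨by linarith, by linarith⟩

lemma sum_lap_mul_exp_mul_le [Nontrivial V] (hG : IsGraph μ) (hP : IsPerron μ m) {h : V → ℝ}
    {c : ℝ} (hc : ∀ x z, 0 < meanKer μ m x z → |h x - h z| ≤ c) :
    ∑ x, lap μ m h x * exp (h x) * m x ≤ c ^ 2 / 2 * ∑ x, exp (h x) * m x := by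
  have := sum_sum_mul_sub_mul_exp_le (w := fun x z => m x * meanKer μ m x z)
    (fun x z => mul_nonneg (hP.1 x).le (meanKer_nonneg hG hP x z)) (mul_meanKer_comm hP)
    fun x z hxz => hc x z (pos_of_mul_pos_right hxz (hP.1 x).le)
  simp only [← mul_sum, sum_meanKer hG hP, mul_one] at this
  calc ∑ x, lap μ m h x * exp (h x) * m x
      = ∑ x, ∑ z, m x * meanKer μ m x z * (h x - h z) * exp (h x) := by
        simp only [lap_eq_sum hG hP, sum_mul]
        exact sum_congr rfl fun x _ => sum_congr rfl fun z _ => by ring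
    _ ≤ c ^ 2 / 2 * ∑ x, m x * exp (h x) := this
    _ = c ^ 2 / 2 * ∑ x, exp (h x) * m x := by simp only [mul_comm (m _)]

theorem sum_exp_mul_le [Nontrivial V] (hG : IsGraph μ) (hP : IsPerron μ m) (hK : 0 < K)
    (hcurv : ∀ x y : V, x ≠ y → K ≤ ricci μ m x y)
    (hD : ∀ x y : V, (0 < μ x y ∨ 0 < μ y x) → max (gdist μ x y) (gdist μ y x) ≤ Λ)
    {f : V → ℝ} (hf : ∀ a b, f b - f a ≤ gdist μ a b) {lam : ℝ} (hlam : 0 ≤ lam) :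
    ∑ x, exp (lam * f x) * m x ≤
      exp (lam * ∑ x, f x * m x) * exp (lam ^ 2 * Λ ^ 2 / (4 * K)) := by
  let F : ℝ → ℝ := fun t => ∑ x, exp (lam * heatSG μ m t f x) * m x
  let F' : ℝ → ℝ := fun t =>
    -∑ x, lap μ m (lam • heatSG μ m t f) x * exp (lam * heatSG μ m t f x) * m x
  have hF : ∀ t, HasDerivAt F (F' t) t := fun t => by
    refine (HasDerivAt.fun_sum fun x (_ : x ∈ univ) =>
      (((hasDerivAt_heatSG μ m f x t).const_mul lam).exp).mul_const (m x)).congr_deriv ?_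
    simp only [F', lap_smul, Pi.smul_apply, smul_eq_mul, ← sum_neg_distrib]
    exact sum_congr rfl fun x _ => by ring
  have hF' : ∀ t, 0 ≤ t → -(lam ^ 2 * Λ ^ 2 / 2 * exp (-(2 * K) * t)) * F t ≤ F' t := by
    intro t ht
    have := sum_lap_mul_exp_mul_le hG hP (h := lam • heatSG μ m t f)
      (c := lam * (exp (-K * t) * Λ)) fun x z hxz => by
        simp only [Pi.smul_apply, smul_eq_mul, ← mul_sub, abs_mul, abs_of_nonneg hlam]
        exact mul_le_mul_of_nonneg_left
          (abs_heatSG_sub_le_of_meanKer_pos hG hP hK hcurv hD hf ht hxz) hlam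
    have hsq : (lam * (exp (-K * t) * Λ)) ^ 2 = lam ^ 2 * Λ ^ 2 * exp (-(2 * K) * t) := by
      rw [mul_pow, mul_pow, ← exp_nat_mul]
      ring_nf
    simp only [Pi.smul_apply, smul_eq_mul, hsq] at this
    simp only [F, F']
    linarith
  have hlim : Tendsto F atTop (𝓝 (exp (lam * ∑ x, f x * m x))) := by
    have := tendsto_finsetSum univ fun x (_ : x ∈ univ) => ((continuous_exp.tendsto _).comp
      ((tendsto_heatSG hG hP hK hcurv hf x).const_mul lam)).mul_const (m x)
    rwa [← mul_sum, hP.2.1, mul_one] at this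
  have := le_mul_exp_of_hasDerivAt_ge_of_tendsto (by positivity) hF hF' hlim
  convert this using 3
  · simp [heatSG_zero]
  · ring

end Concentration

theorem concentration_of_measure_general {V : Type*} [Fintype V] [DecidableEq V]
    (μ : V → V → ℝ) (m : V → ℝ) (K Λ : ℝ)
    (hG : IsGraph μ) (hP : IsPerron μ m) (hK : 0 < K)
    (hcurv : ∀ x y : V, x ≠ y → K ≤ ricci μ m x y) (hΛ : 1 ≤ Λ)
    (hD : ∀ x y : V, (0 < μ x y ∨ 0 < μ y x) → max (gdist μ x y) (gdist μ y x) ≤ Λ) :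
    ∀ f : V → ℝ, (∀ a b, f b - f a ≤ gdist μ a b) → ∀ r : ℝ, 0 < r →
      ∑ x ∈ Finset.univ.filter (fun x => (∑ z, f z * m z) + r ≤ f x), m x
        ≤ Real.exp (-(K * r ^ 2) / Λ ^ 2) := by
  intro f hf r hr
  rcases subsingleton_or_nontrivial V with hV | hV
  · have hmean : ∀ x, ∑ z, f z * m z = f x := fun x => by
      have hm := hP.2.1
      rw [Fintype.sum_subsingleton _ x] at hm ⊢
      rw [hm, mul_one]
    have hempty : univ.filter (fun x => ∑ z, f z * m z + r ≤ f x) = ∅ :=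
      filter_eq_empty_iff.2 fun x _ => by linarith [hmean x]
    rw [hempty, sum_empty]
    exact (exp_pos _).le
  · have hΛ0 : 0 < Λ := one_pos.trans_le hΛ
    -- the Chernoff exponent `λ = 2Kr/Λ²` minimises `-λr + λ²Λ²/(4K)`
    set lam := 2 * K * r / Λ ^ 2
    calc ∑ x ∈ univ.filter (fun x => (∑ z, f z * m z) + r ≤ f x), m x
        ≤ exp (-(lam * (∑ z, f z * m z + r))) * ∑ x, exp (lam * f x) * m x :=
          sum_filter_le_exp_mul_sum_exp (fun x => (hP.1 x).le) (by positivity) _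
      _ ≤ exp (-(lam * (∑ z, f z * m z + r))) *
            (exp (lam * ∑ x, f x * m x) * exp (lam ^ 2 * Λ ^ 2 / (4 * K))) :=
          mul_le_mul_of_nonneg_left (sum_exp_mul_le hG hP hK hcurv hD hf (by positivity))
            (exp_pos _).le
      _ = exp (-(K * r ^ 2) / Λ ^ 2) := by
          rw [← exp_add, ← exp_add]
          congr 1
          simp only [lam]
          field_simp
          ring

/-- Theorem 1.2: concentration of measure inequality for directed graphs of positive
Ricci curvature with bounded jumps. -/
theorem concentration_of_measure {V : Type*} [Fintype V] [DecidableEq V] [Nonempty V]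
    (μ : V → V → ℝ) (m : V → ℝ) (K Λ : ℝ)
    (hG : IsGraph μ) (hP : IsPerron μ m) (hK : 0 < K)
    (hcurv : ∀ x y : V, x ≠ y → K ≤ ricci μ m x y) (hΛ : 1 ≤ Λ)
    (hD : ∀ x y : V, (0 < μ x y ∨ 0 < μ y x) → max (gdist μ x y) (gdist μ y x) ≤ Λ) :
    ∀ f : V → ℝ, (∀ a b, f b - f a ≤ gdist μ a b) → ∀ r : ℝ, 0 < r →
      ∑ x ∈ Finset.univ.filter (fun x => (∑ z, f z * m z) + r ≤ f x), m x
        ≤ Real.exp (-(K * r ^ 2) / Λ ^ 2) :=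
  concentration_of_measure_general μ m K Λ hG hP hK hcurv hΛ hD

end Chung
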